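/- arXiv:2007.05570 — 5 statements merged into one kernel-verified Lean document; each statement's English description precedes it below -/
import Mathlib

section
/- Let Z and U be Hilbert spaces and G : U → Z a bounded linear operator with Gramian Q = G G*. If the range of G is dense in Z, then for every z ∈ Z, α (α I + Q)^{-1} z → 0 as α → 0+. -/
open scoped InnerProductSpace Topology

/-!
Positivity of `Q` gives `α ‖y‖ ≤ ‖(α + Q) y‖`, so the operators `α (α + Q)⁻¹` have norm at most `1`.
On the range of `Q` they tend to zero, since `α (α + Q)⁻¹ Q w = α w - α · α (α + Q)⁻¹ w`.
That range is dense: `ker Q = ker G* = (range G)ᗮ = 0`, and `Q` is self-adjoint.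
A uniformly bounded family of operators converging to zero on a dense set converges to zero
everywhere.
-/

open Filter

namespace ContinuousLinearMap

section DenseExtension

variable {ι 𝕜 E F : Type*} [NontriviallyNormedField 𝕜] [NormedAddCommGroup E] [NormedSpace 𝕜 E]
  [NormedAddCommGroup F] [NormedSpace 𝕜 F]

theorem tendsto_apply_zero_of_dense_of_eventually_norm_le {l : Filter ι} {T : ι → E →L[𝕜] F}
    {C : ℝ} (hT : ∀ᶠ i in l, ‖T i‖ ≤ C) {s : Set E} (hs : Dense s)
    (h : ∀ y ∈ s, Tendsto (fun i => T i y) l (𝓝 0)) (x : E) :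
    Tendsto (fun i => T i x) l (𝓝 0) := by
  rw [Metric.tendsto_nhds]
  intro ε hε
  obtain ⟨δ, hδ, hCδ⟩ := exists_pos_mul_lt (half_pos hε) C
  obtain ⟨y, hxy, hys⟩ := Metric.dense_iff.1 hs x δ hδ
  filter_upwards [hT, Metric.tendsto_nhds.1 (h y hys) _ (half_pos hε)] with i hTi hyi
  rw [dist_zero_right] at hyi ⊢
  rw [Metric.mem_ball, dist_comm, dist_eq_norm] at hxy
  calc ‖T i x‖ = ‖T i (x - y) + T i y‖ := by rw [← map_add, sub_add_cancel]
    _ ≤ ‖T i‖ * ‖x - y‖ + ‖T i y‖ := norm_add_le_of_le ((T i).le_opNorm _) le_rfl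
    _ ≤ C * δ + ‖T i y‖ := by gcongr; exact (norm_nonneg _).trans hTi
    _ < ε := by linarith

end DenseExtension

section DenseRange

variable {𝕜 E F : Type*} [RCLike 𝕜] [NormedAddCommGroup E] [InnerProductSpace 𝕜 E]
  [NormedAddCommGroup F] [InnerProductSpace 𝕜 F] [CompleteSpace E] [CompleteSpace F]

theorem denseRange_iff_ker_adjoint_eq_bot (T : E →L[𝕜] F) :
    DenseRange T ↔ (adjoint T).ker = ⊥ := by
  rw [← orthogonal_range, ← Submodule.topologicalClosure_eq_top_iff,
    ← Submodule.dense_iff_topologicalClosure_eq_top, DenseRange]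
  rfl

theorem denseRange_self_comp_adjoint_iff (T : E →L[𝕜] F) :
    DenseRange (T ∘L adjoint T) ↔ DenseRange T := by
  rw [denseRange_iff_ker_adjoint_eq_bot, denseRange_iff_ker_adjoint_eq_bot, adjoint_comp,
    adjoint_adjoint, ker_self_comp_adjoint]

end DenseRange

variable {E : Type*} [NormedAddCommGroup E] [InnerProductSpace ℝ E] {Q : E →L[ℝ] E}

theorem IsPositive.mul_norm_le_norm_smul_add_apply (hQ : Q.IsPositive) (α : ℝ) (y : E) :
    α * ‖y‖ ≤ ‖α • y + Q y‖ := by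
  have key : α * ‖y‖ ^ 2 ≤ ‖α • y + Q y‖ * ‖y‖ :=
    calc α * ‖y‖ ^ 2 ≤ α * ‖y‖ ^ 2 + ⟪Q y, y⟫_ℝ := le_add_of_nonneg_right (hQ.inner_nonneg_left y)
      _ = ⟪α • y + Q y, y⟫_ℝ := by
        rw [inner_add_left, real_inner_smul_left, real_inner_self_eq_norm_sq]
      _ ≤ ‖α • y + Q y‖ * ‖y‖ := real_inner_le_norm _ _
  rcases (norm_nonneg y).eq_or_lt with hy | hy
  · rw [← hy, mul_zero]
    exact norm_nonneg _
  · nlinarith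

theorem IsPositive.norm_smul_le_one_of_smul_one_add_comp_eq_one (hQ : Q.IsPositive)
    {R : E →L[ℝ] E} {α : ℝ} (hα : 0 ≤ α) (hR : (α • (1 : E →L[ℝ] E) + Q) ∘L R = 1) :
    ‖α • R‖ ≤ 1 := by
  refine opNorm_le_bound _ zero_le_one fun z => ?_
  have hz : α • R z + Q (R z) = z := by simpa using congr($hR z)
  calc ‖(α • R) z‖ = α * ‖R z‖ := by rw [smul_apply, norm_smul, Real.norm_of_nonneg hα]
    _ ≤ ‖α • R z + Q (R z)‖ := hQ.mul_norm_le_norm_smul_add_apply α _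
    _ = 1 * ‖z‖ := by rw [hz, one_mul]

theorem apply_apply_eq_sub_smul_of_comp_smul_one_add_eq_one {R : E →L[ℝ] E} {α : ℝ}
    (hR : R ∘L (α • (1 : E →L[ℝ] E) + Q) = 1) (w : E) : R (Q w) = w - α • R w := by
  have hw : α • R w + R (Q w) = w := by simpa using congr($hR w)
  exact eq_sub_of_add_eq' hw

theorem IsPositive.tendsto_smul_resolvent_apply_apply {R : ℝ → E →L[ℝ] E} (hQ : Q.IsPositive)
    (hR : ∀ α : ℝ, 0 < α →
      R α ∘L (α • (1 : E →L[ℝ] E) + Q) = 1 ∧ (α • (1 : E →L[ℝ] E) + Q) ∘L R α = 1) (w : E) :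
    Tendsto (fun α : ℝ => α • R α (Q w)) (𝓝[>] 0) (𝓝 0) := by
  have hbdd : IsBoundedUnder (· ≤ ·) (𝓝[>] 0) fun α : ℝ => ‖α • R α w‖ := by
    refine isBoundedUnder_of_eventually_le (a := ‖w‖) (eventually_nhdsWithin_of_forall ?_)
    intro α (hα : 0 < α)
    simpa using le_of_opNorm_le _
      (hQ.norm_smul_le_one_of_smul_one_add_comp_eq_one hα.le (hR α hα).2) w
  have hlim : Tendsto (fun α : ℝ => α • w - α • (α • R α w)) (𝓝[>] 0) (𝓝 0) := by
    have h0 : Tendsto (fun α : ℝ => α) (𝓝[>] 0) (𝓝 0) := nhdsWithin_le_nhds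
    simpa using (h0.smul_const w).sub (h0.zero_smul_isBoundedUnder_le hbdd)
  refine hlim.congr' (eventually_nhdsWithin_of_forall fun α (hα : 0 < α) => ?_)
  dsimp only
  rw [apply_apply_eq_sub_smul_of_comp_smul_one_add_eq_one (hR α hα).1, smul_sub]

end ContinuousLinearMap

/-- If G has dense range, then α (α I + Q)⁻¹ z → 0 as α → 0⁺,
where Q = G G*. The inverse is given by a family R α satisfying the inverse identities. -/
theorem resolvent_tendsto_zero_of_denseRange
    {U Z : Type*} [NormedAddCommGroup U] [InnerProductSpace ℝ U] [CompleteSpace U]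
    [NormedAddCommGroup Z] [InnerProductSpace ℝ Z] [CompleteSpace Z]
    (G : U →L[ℝ] Z) (Q : Z →L[ℝ] Z) (hQ : Q = G ∘L ContinuousLinearMap.adjoint G)
    (R : ℝ → Z →L[ℝ] Z)
    (hR : ∀ α : ℝ, 0 < α →
      (R α) ∘L (α • (1 : Z →L[ℝ] Z) + Q) = 1 ∧ (α • (1 : Z →L[ℝ] Z) + Q) ∘L (R α) = 1)
    (hdense : DenseRange G) :
    ∀ z : Z, Filter.Tendsto (fun α : ℝ => α • R α z) (𝓝[>] 0) (𝓝 0) := by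
  have hQpos : Q.IsPositive := hQ ▸ G.isPositive_self_comp_adjoint
  have hQdense : DenseRange Q := hQ ▸ G.denseRange_self_comp_adjoint_iff.2 hdense
  have hbound : ∀ᶠ α in 𝓝[>] (0 : ℝ), ‖α • R α‖ ≤ 1 :=
    eventually_nhdsWithin_of_forall fun α (hα : 0 < α) =>
      hQpos.norm_smul_le_one_of_smul_one_add_comp_eq_one hα.le (hR α hα).2
  refine ContinuousLinearMap.tendsto_apply_zero_of_dense_of_eventually_norm_le hbound hQdense ?_
  rintro _ ⟨w, rfl⟩
  exact hQpos.tendsto_smul_resolvent_apply_apply hR w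
end

section
/- Let Z and U be Hilbert spaces and G : U → Z a bounded linear operator with Gramian Q = G G*. If for every z ∈ Z one has α (α I + Q)^{-1} z → 0 as α → 0+, then the range of G is dense in Z. -/
open scoped InnerProductSpace Topology

/-- If α (α I + Q)⁻¹ z → 0 as α → 0⁺ for every z, where Q = G G*,
then G has dense range. -/
theorem denseRange_of_resolvent_tendsto_zero
    {U Z : Type*} [NormedAddCommGroup U] [InnerProductSpace ℝ U] [CompleteSpace U]
    [NormedAddCommGroup Z] [InnerProductSpace ℝ Z] [CompleteSpace Z]
    (G : U →L[ℝ] Z) (Q : Z →L[ℝ] Z) (hQ : Q = G ∘L ContinuousLinearMap.adjoint G)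
    (R : ℝ → Z →L[ℝ] Z)
    (hR : ∀ α : ℝ, 0 < α →
      (R α) ∘L (α • (1 : Z →L[ℝ] Z) + Q) = 1 ∧ (α • (1 : Z →L[ℝ] Z) + Q) ∘L (R α) = 1)
    (hlim : ∀ z : Z, Filter.Tendsto (fun α : ℝ => α • R α z) (𝓝[>] 0) (𝓝 0)) :
    DenseRange G := by
  intro z
  have key : ∀ α : ℝ, 0 < α → Q (R α z) = z - α • R α z := by
    intro α hα
    have h := congrArg (fun T : Z →L[ℝ] Z => T z) (hR α hα).2
    simp [ContinuousLinearMap.add_apply, ContinuousLinearMap.smul_apply] at h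
    linear_combination (norm := abel) h
  have htend : Filter.Tendsto (fun α : ℝ => Q (R α z)) (𝓝[>] 0) (𝓝 z) := by
    have : Filter.Tendsto (fun α : ℝ => z - α • R α z) (𝓝[>] 0) (𝓝 (z - 0)) :=
      Filter.Tendsto.sub tendsto_const_nhds (hlim z)
    rw [sub_zero] at this
    refine this.congr' ?_
    filter_upwards [self_mem_nhdsWithin] with α hα using (key α hα).symm
  refine mem_closure_of_tendsto htend ?_
  filter_upwards with α
  exact ⟨ContinuousLinearMap.adjoint G (R α z), by simp [hQ]⟩
end

section
/- Let Z, U be Hilbert spaces, G : U → Z bounded linear with Gramian Q = G G* having dense range of G. For z ∈ Z, v ∈ U, and 0 < α ≤ 1, set u_α = G*(α I + Q)^{-1} z + (v − G*(α I + Q)^{-1} G v). Then G u_α = z − α (α I + Q)^{-1}(z − G v), and thus G u_α → z as α → 0+. -/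
open scoped InnerProductSpace Topology

section Aux

variable {U Z : Type*} [NormedAddCommGroup U] [InnerProductSpace ℝ U] [CompleteSpace U]
    [NormedAddCommGroup Z] [InnerProductSpace ℝ Z] [CompleteSpace Z]
    (G : U →L[ℝ] Z) (Q : Z →L[ℝ] Z)

/-- The basic resolvent identity: `α • R α w + Q (R α w) = w`. -/
lemma aux_resolvent (R : ℝ → Z →L[ℝ] Z)
    (hR : ∀ α : ℝ, 0 < α →
      (R α) ∘L (α • (1 : Z →L[ℝ] Z) + Q) = 1 ∧ (α • (1 : Z →L[ℝ] Z) + Q) ∘L (R α) = 1)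
    {α : ℝ} (hα : 0 < α) (w : Z) : α • R α w + Q (R α w) = w := by
  have := congrArg (fun T : Z →L[ℝ] Z => T w) (hR α hα).2
  simpa using this

lemma aux_Q_nonneg (hQ : Q = G ∘L ContinuousLinearMap.adjoint G) (u : Z) :
    (0 : ℝ) ≤ ⟪Q u, u⟫_ℝ := by
  rw [hQ]
  have : ⟪G (ContinuousLinearMap.adjoint G u) , u⟫_ℝ
      = ⟪ContinuousLinearMap.adjoint G u, ContinuousLinearMap.adjoint G u⟫_ℝ := by
    rw [← ContinuousLinearMap.adjoint_inner_right]
  simpa [ContinuousLinearMap.comp_apply, this] using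
    real_inner_self_nonneg (x := ContinuousLinearMap.adjoint G u)

/-- Uniform bound `α ‖R α w‖ ≤ ‖w‖`. -/
lemma aux_bound (hQ : Q = G ∘L ContinuousLinearMap.adjoint G) (R : ℝ → Z →L[ℝ] Z)
    (hR : ∀ α : ℝ, 0 < α →
      (R α) ∘L (α • (1 : Z →L[ℝ] Z) + Q) = 1 ∧ (α • (1 : Z →L[ℝ] Z) + Q) ∘L (R α) = 1)
    {α : ℝ} (hα : 0 < α) (w : Z) : α * ‖R α w‖ ≤ ‖w‖ := by
  set u := R α w with hu
  have hres : α • u + Q u = w := aux_resolvent Q R hR hα w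
  have h1 : α * ‖u‖ ^ 2 ≤ ⟪w, u⟫_ℝ := by
    have := aux_Q_nonneg G Q hQ u
    have h2 : ⟪w, u⟫_ℝ = α * ⟪u, u⟫_ℝ + ⟪Q u, u⟫_ℝ := by
      rw [← hres, inner_add_left, real_inner_smul_left]
    rw [h2, real_inner_self_eq_norm_sq]
    linarith
  have h3 : ⟪w, u⟫_ℝ ≤ ‖w‖ * ‖u‖ := real_inner_le_norm w u
  rcases eq_or_lt_of_le (norm_nonneg u) with h | h
  · rw [← h]; simpa using norm_nonneg w
  · have := h1.trans h3
    have h4 : α * ‖u‖ * ‖u‖ ≤ ‖w‖ * ‖u‖ := by nlinarith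
    exact le_of_mul_le_mul_right h4 h

/-- Dense range of `G` gives dense range of `Q = G G*`. -/
lemma aux_dense_Q (hQ : Q = G ∘L ContinuousLinearMap.adjoint G) (hdense : DenseRange G) :
    DenseRange Q := by
  have hadj : ∀ w : Z, ContinuousLinearMap.adjoint G w = 0 → w = 0 := by
    intro w hw
    have horth : ∀ u : U, ⟪G u, w⟫_ℝ = 0 := by
      intro u
      rw [← ContinuousLinearMap.adjoint_inner_right, hw, inner_zero_right]
    have : ∀ x : Z, ⟪x, w⟫_ℝ = 0 := by
      intro x
      have hx : x ∈ closure (Set.range G) := hdense x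
      have hcont : Continuous fun y : Z => ⟪y, w⟫_ℝ := continuous_inner.comp
        (continuous_id.prodMk continuous_const)
      have : Set.range G ⊆ {y : Z | ⟪y, w⟫_ℝ = 0} := by
        rintro _ ⟨u, rfl⟩; exact horth u
      have hclosed : IsClosed {y : Z | ⟪y, w⟫_ℝ = 0} := isClosed_eq hcont continuous_const
      exact hclosed.closure_subset ((closure_mono this).trans_eq rfl hx)
    simpa using this w
  -- now show range of Q is dense
  have hKrange : (Set.range Q : Set Z) = (LinearMap.range (Q : Z →ₗ[ℝ] Z) : Submodule ℝ Z) := by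
    ext x; simp [LinearMap.mem_range]
  rw [DenseRange, hKrange, Submodule.dense_iff_topologicalClosure_eq_top,
    Submodule.topologicalClosure_eq_top_iff, Submodule.eq_bot_iff]
  intro w hw
  have hQw : ⟪Q w, w⟫_ℝ = 0 := hw (Q w) (LinearMap.mem_range_self _ w)
  have : ⟪ContinuousLinearMap.adjoint G w, ContinuousLinearMap.adjoint G w⟫_ℝ = 0 := by
    rw [ContinuousLinearMap.adjoint_inner_left, real_inner_comm]
    rw [hQ] at hQw
    simpa [ContinuousLinearMap.comp_apply, real_inner_comm] using hQw
  exact hadj w (inner_self_eq_zero.mp this)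

/-- Key convergence: `α • R α w → 0` as `α → 0⁺`. -/
lemma aux_tendsto (hQ : Q = G ∘L ContinuousLinearMap.adjoint G) (R : ℝ → Z →L[ℝ] Z)
    (hR : ∀ α : ℝ, 0 < α →
      (R α) ∘L (α • (1 : Z →L[ℝ] Z) + Q) = 1 ∧ (α • (1 : Z →L[ℝ] Z) + Q) ∘L (R α) = 1)
    (hdense : DenseRange G) (w : Z) :
    Filter.Tendsto (fun α : ℝ => α • R α w) (𝓝[>] 0) (𝓝 0) := by
  rw [Metric.tendsto_nhdsWithin_nhds]
  intro ε hε
  obtain ⟨_, ⟨y, rfl⟩, hx⟩ := Metric.mem_closure_iff.mp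
    ((aux_dense_Q G Q hQ hdense) w) (ε / 3) (by linarith)
  refine ⟨min 1 (ε / (3 * (2 * ‖y‖ + 1))), ?_, ?_⟩
  · have : 0 < ε / (3 * (2 * ‖y‖ + 1)) := by positivity
    exact lt_min one_pos this
  intro α hα hd
  replace hα : 0 < α := hα
  rw [Real.dist_eq, sub_zero, abs_of_pos hα] at hd
  have hα1 : α < 1 := lt_of_lt_of_le hd (min_le_left _ _)
  have hαy : α * (2 * ‖y‖ + 1) < ε / 3 := by
    have h1 : α < ε / (3 * (2 * ‖y‖ + 1)) := lt_of_lt_of_le hd (min_le_right _ _)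
    have h2 : (0:ℝ) < 2 * ‖y‖ + 1 := by positivity
    calc α * (2 * ‖y‖ + 1) < ε / (3 * (2 * ‖y‖ + 1)) * (2 * ‖y‖ + 1) := by
          exact mul_lt_mul_of_pos_right h1 h2
      _ = ε / 3 := by field_simp
  -- decompose
  have hres : α • R α (Q y) + Q (R α (Q y)) = Q y := aux_resolvent Q R hR hα (Q y)
  have hRQ : R α (Q y) = y - α • R α y := by
    have := aux_resolvent Q R hR hα (Q y)
    have h2 := congrArg (fun T : Z →L[ℝ] Z => T y) (hR α hα).1
    simp only [ContinuousLinearMap.comp_apply, ContinuousLinearMap.add_apply,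
      ContinuousLinearMap.smul_apply, ContinuousLinearMap.one_apply, map_add, map_smul] at h2
    -- h2 : R α (α • y + Q y) = y, i.e. α • R α y + R α (Q y) = y
    have : α • R α y + R α (Q y) = y := by
      simpa [map_add, map_smul] using h2
    linear_combination (norm := abel) this
  have hsplit : α • R α w = α • R α (w - Q y) + α • R α (Q y) := by
    rw [← smul_add, ← map_add, sub_add_cancel]
  rw [dist_zero_right, hsplit]
  have hb1 : ‖α • R α (w - Q y)‖ ≤ ‖w - Q y‖ := by
    rw [norm_smul, Real.norm_eq_abs, abs_of_pos hα]
    exact aux_bound G Q hQ R hR hα _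
  have hb2 : ‖α • R α (Q y)‖ ≤ α * (2 * ‖y‖ + 1) := by
    have h4 : α * ‖R α y‖ ≤ ‖y‖ := aux_bound G Q hQ R hR hα _
    rw [hRQ, smul_sub]
    calc ‖α • y - α • α • R α y‖ ≤ ‖α • y‖ + ‖α • α • R α y‖ := norm_sub_le _ _
      _ = α * ‖y‖ + α * (α * ‖R α y‖) := by
          rw [norm_smul, norm_smul, norm_smul]; simp [abs_of_pos hα]
      _ ≤ α * (2 * ‖y‖ + 1) := by nlinarith [norm_nonneg y, norm_nonneg (R α y)]
  have hwy : ‖w - Q y‖ < ε / 3 := by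
    rw [← dist_eq_norm]; exact hx
  calc ‖α • R α (w - Q y) + α • R α (Q y)‖
      ≤ ‖α • R α (w - Q y)‖ + ‖α • R α (Q y)‖ := norm_add_le _ _
    _ < ε / 3 + ε / 3 := by
        refine add_lt_add_of_lt_of_le (lt_of_le_of_lt hb1 hwy) (hb2.trans hαy.le)
    _ < ε := by linarith

end Aux

/-- With u_α = G*(αI+Q)⁻¹ z + (v − G*(αI+Q)⁻¹ G v), one has
G u_α = z − α (αI+Q)⁻¹ (z − G v), and if G has dense range then G u_α → z as α → 0⁺. -/
theorem control_formula_with_v_and_convergence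
    {U Z : Type*} [NormedAddCommGroup U] [InnerProductSpace ℝ U] [CompleteSpace U]
    [NormedAddCommGroup Z] [InnerProductSpace ℝ Z] [CompleteSpace Z]
    (G : U →L[ℝ] Z) (Q : Z →L[ℝ] Z) (hQ : Q = G ∘L ContinuousLinearMap.adjoint G)
    (R : ℝ → Z →L[ℝ] Z)
    (hR : ∀ α : ℝ, 0 < α →
      (R α) ∘L (α • (1 : Z →L[ℝ] Z) + Q) = 1 ∧ (α • (1 : Z →L[ℝ] Z) + Q) ∘L (R α) = 1)
    (hdense : DenseRange G) (z : Z) (v : U) :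
    (∀ α : ℝ, 0 < α → α ≤ 1 →
        G (ContinuousLinearMap.adjoint G (R α z)
            + (v - ContinuousLinearMap.adjoint G (R α (G v))))
          = z - α • R α (z - G v)) ∧
      Filter.Tendsto
        (fun α : ℝ => G (ContinuousLinearMap.adjoint G (R α z)
            + (v - ContinuousLinearMap.adjoint G (R α (G v)))))
        (𝓝[>] 0) (𝓝 z) := by
  -- key algebraic identity, valid for all α > 0
  have key : ∀ α : ℝ, 0 < α →
      G (ContinuousLinearMap.adjoint G (R α z)
          + (v - ContinuousLinearMap.adjoint G (R α (G v))))
        = z - α • R α (z - G v) := by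
    intro α hα
    have hGGstar : ∀ x : Z, G (ContinuousLinearMap.adjoint G (R α x)) = x - α • R α x := by
      intro x
      have hres := aux_resolvent Q R hR hα x
      have : Q (R α x) = G (ContinuousLinearMap.adjoint G (R α x)) := by
        rw [hQ]; rfl
      rw [← this]
      linear_combination (norm := abel) hres
    have hlin : R α (z - G v) = R α z - R α (G v) := map_sub _ _ _
    rw [map_add, map_sub, hGGstar z, hGGstar (G v), hlin, smul_sub]
    abel
  refine ⟨fun α hα _ => key α hα, ?_⟩
  -- convergence
  have hconv : Filter.Tendsto (fun α : ℝ => z - α • R α (z - G v)) (𝓝[>] 0) (𝓝 z) := by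
    have h0 := aux_tendsto G Q hQ R hR hdense (z - G v)
    have := Filter.Tendsto.sub (tendsto_const_nhds (x := z)) h0
    simpa using this
  refine Filter.Tendsto.congr' ?_ hconv
  filter_upwards [self_mem_nhdsWithin] with α hα
  exact (key α hα).symm
end

section
/- Let Z, U be Hilbert spaces, {φ_{j,k}} a complete orthonormal family of Z with finite multiplicities γ_j, 0 < λ_1 < λ_2 < ⋯ → ∞, T(t) the semigroup T(t)z = Σ_j e^{−λ_j t} Σ_k ⟨z, φ_{j,k}⟩ φ_{j,k}, and B : U → Z a bounded linear operator. Assume that for each j the vectors {B* φ_{j,1}, …, B* φ_{j,γ_j}} are linearly independent in U. If z ∈ Z satisfies B* T(t) z = 0 for all t in some interval [0, δ] with δ > 0, then z = 0. -/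
/-!
For `x : Z` the observation `t ↦ ⟪x, T t z⟫` is the Dirichlet series `∑ⱼ ⟪x, Pⱼ z⟫ e^{-λⱼ t}`,
where `Pⱼ` is the projection onto the `j`-th eigenspace, and its coefficients are absolutely
summable. For `x = B (B* Pⱼ z)` it vanishes on `(0, δ)`, hence by analyticity on `(0, ∞)`, and
letting `t → ∞` kills its coefficients one at a time. So `‖B* Pⱼ z‖² = 0`, and the linear
independence of the `B* φ_{j,k}` forces every `⟪z, φ_{j,k}⟫` to vanish.
-/

open scoped InnerProductSpace Topology
open Filter Set Real

noncomputable def dirichletSeries {ι : Type*} (a lam : ι → ℝ) (t : ℝ) : ℝ :=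
  ∑' i, a i * exp (-lam i * t)

/- The series extends holomorphically to the right half-plane, so by the identity theorem it
cannot vanish on an interval without vanishing on the whole half-line. -/
theorem dirichletSeries_eqOn_zero_of_eqOn_Ioo {ι : Type*} {a lam : ι → ℝ}
    (hlam : ∀ i, 0 ≤ lam i) (ha : Summable fun i => |a i|) {δ : ℝ} (hδ : 0 < δ)
    (h : EqOn (dirichletSeries a lam) 0 (Ioo 0 δ)) :
    EqOn (dirichletSeries a lam) 0 (Ioi 0) := by
  set H : Set ℂ := {s | 0 < s.re}
  set F : ℂ → ℂ := fun s => ∑' i, (a i : ℂ) * Complex.exp (-(lam i : ℂ) * s)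
  have hH : IsOpen H := isOpen_lt continuous_const Complex.continuous_re
  have hF : DifferentiableOn ℂ F H := by
    refine Complex.differentiableOn_tsum_of_summable_norm ha (fun i => ?_) hH fun i s hs => ?_
    · fun_prop
    · have hre : (-(lam i : ℂ) * s).re = -lam i * s.re := by simp
      rw [norm_mul, Complex.norm_exp, hre, Complex.norm_real, Real.norm_eq_abs]
      exact mul_le_of_le_one_right (abs_nonneg _)
        (exp_le_one_iff.2 (mul_nonpos_of_nonpos_of_nonneg (neg_nonpos.2 (hlam i)) (le_of_lt hs)))
  have hF_ofReal : ∀ t : ℝ, F t = dirichletSeries a lam t := by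
    intro t
    simp only [F, dirichletSeries, Complex.ofReal_tsum, Complex.ofReal_mul, Complex.ofReal_exp,
      Complex.ofReal_neg]
  have hanalytic : AnalyticOnNhd ℝ (F ∘ (↑) : ℝ → ℂ) (Ioi 0) := fun t ht =>
    ((hF.analyticOnNhd hH) t (by simpa [H] using ht)).restrictScalars.comp
      (Complex.ofRealCLM.analyticAt t)
  have hzero : (F ∘ (↑) : ℝ → ℂ) =ᶠ[𝓝 (δ / 2)] 0 := by
    filter_upwards [Ioo_mem_nhds (half_pos hδ) (half_lt_self hδ)] with t ht
    simp [hF_ofReal, h ht]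
  intro t ht
  have := hanalytic.eqOn_zero_of_preconnected_of_eventuallyEq_zero isPreconnected_Ioi
    (half_pos hδ) hzero ht
  simpa [hF_ofReal] using this

/- Multiplying by `e^{l_j t}` and letting `t → ∞` isolates the coefficient `A j` once the
earlier ones are known to vanish. -/
theorem dirichletSeries_coeff_eq_zero {l A : ℕ → ℝ} (hl : StrictMono l)
    (hA : Summable fun m => |A m|) (h : ∀ᶠ t in atTop, dirichletSeries A l t = 0) : A = 0 := by
  ext j
  induction j using Nat.strong_induction_on with
  | _ j ih =>
  have hlim : Tendsto (fun t => ∑' m, A m * exp ((l j - l m) * t)) atTop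
      (𝓝 (∑' m, if m = j then A j else 0)) := by
    refine tendsto_tsum_of_dominated_convergence hA (fun m => ?_) ?_
    · rcases lt_trichotomy m j with hm | rfl | hm
      · simp [ih m hm, hm.ne]
      · simp
      · have hexp : Tendsto (fun t => exp ((l j - l m) * t)) atTop (𝓝 0) :=
          tendsto_exp_atBot.comp (tendsto_id.const_mul_atTop_of_neg (sub_neg.2 (hl hm)))
        simpa [hm.ne'] using hexp.const_mul (A m)
    · filter_upwards [eventually_ge_atTop 0] with t ht m
      rcases lt_or_ge m j with hm | hm
      · simp [ih m hm]
      · rw [norm_mul, Real.norm_eq_abs, Real.norm_of_nonneg (exp_pos _).le]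
        exact mul_le_of_le_one_right (abs_nonneg _) (exp_le_one_iff.2
          (mul_nonpos_of_nonpos_of_nonneg (sub_nonpos.2 (hl.monotone hm)) ht))
  have hzero : ∀ᶠ t in atTop, ∑' m, A m * exp ((l j - l m) * t) = 0 := by
    filter_upwards [h] with t ht
    have hrescale : ∑' m, A m * exp ((l j - l m) * t) = exp (l j * t) * dirichletSeries A l t := by
      rw [dirichletSeries, ← tsum_mul_left]
      congr 1 with m
      rw [mul_left_comm, ← exp_add]
      ring_nf
    rw [hrescale, ht, mul_zero]
  rw [tsum_ite_eq] at hlim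
  exact tendsto_nhds_unique (hlim.congr' hzero) tendsto_const_nhds

namespace HilbertBasis

variable {ι E : Type*} [NormedAddCommGroup E] [InnerProductSpace ℝ E] (b : HilbertBasis ι ℝ E)

theorem summable_abs_inner_mul_inner (x y : E) :
    Summable fun i => |⟪x, b i⟫_ℝ * ⟪y, b i⟫_ℝ| := by
  simpa [abs_mul, b.repr_apply_apply, real_inner_comm] using
    lp.summable_mul (p := 2) (q := 2) (by simpa using Real.HolderConjugate.two_two)
      (b.repr x) (b.repr y)

theorem hasSum_inner_tsum_mul_smul {μ : ι → ℝ} {C : ℝ} (hμ : ∀ i, |μ i| ≤ C) (x z : E) :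
    HasSum (fun i => μ i * (⟪z, b i⟫_ℝ * ⟪x, b i⟫_ℝ))
      ⟪x, ∑' i, (μ i * ⟪z, b i⟫_ℝ) • b i⟫_ℝ := by
  set f : ι → ℝ := fun i => μ i * ⟪z, b i⟫_ℝ
  have hf : Memℓp f 2 := ((b.repr z).2.norm.const_mul C).mono fun i => by
    rw [norm_mul, Real.norm_eq_abs, b.repr_apply_apply, real_inner_comm]
    exact mul_le_mul_of_nonneg_right (hμ i) (norm_nonneg _)
  have hsum : ∑' i, f i • b i = b.repr.symm ⟨f, hf⟩ := (b.hasSum_repr_symm ⟨f, hf⟩).tsum_eq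
  have hcoeff : ∀ i, ⟪b i, b.repr.symm ⟨f, hf⟩⟫_ℝ = f i := fun i => by
    rw [← b.repr_apply_apply, LinearIsometryEquiv.apply_symm_apply]
  have hterms : (fun i => μ i * (⟪z, b i⟫_ℝ * ⟪x, b i⟫_ℝ)) =
      fun i => ⟪x, b i⟫_ℝ * ⟪b i, b.repr.symm ⟨f, hf⟩⟫_ℝ := funext fun i => by
    rw [hcoeff]
    ring
  rw [hsum, hterms]
  exact b.hasSum_inner_mul_inner x _

end HilbertBasis

section EigenExpansion

variable {J Z : Type*} {κ : J → Type*} [∀ j, Fintype (κ j)]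
  [NormedAddCommGroup Z] [InnerProductSpace ℝ Z] (φ : HilbertBasis (Σ j, κ j) ℝ Z)

noncomputable def eigenProj (j : J) (z : Z) : Z :=
  ∑ k, ⟪z, φ ⟨j, k⟩⟫_ℝ • φ ⟨j, k⟩

theorem inner_eigenProj (x z : Z) (j : J) :
    ⟪x, eigenProj φ j z⟫_ℝ = ∑ k, ⟪z, φ ⟨j, k⟩⟫_ℝ * ⟪x, φ ⟨j, k⟩⟫_ℝ := by
  simp only [eigenProj, inner_sum, real_inner_smul_right]

theorem summable_abs_inner_eigenProj (x z : Z) :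
    Summable fun j => |⟪x, eigenProj φ j z⟫_ℝ| := by
  have hsum := (φ.summable_abs_inner_mul_inner z x).sigma
  simp only [tsum_fintype] at hsum
  refine hsum.of_nonneg_of_le (fun j => abs_nonneg _) fun j => ?_
  rw [inner_eigenProj]
  exact Finset.abs_sum_le_sum_abs _ _

theorem hasSum_inner_eigenProj_mul_exp {l : J → ℝ} (hl : ∀ j, 0 ≤ l j) (x z : Z) {t : ℝ}
    (ht : 0 ≤ t) :
    HasSum (fun j => ⟪x, eigenProj φ j z⟫_ℝ * exp (-l j * t))
      ⟪x, ∑' i : Σ j, κ j, (exp (-l i.1 * t) * ⟪z, φ i⟫_ℝ) • φ i⟫_ℝ := by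
  have hμ : ∀ i : Σ j, κ j, |exp (-l i.1 * t)| ≤ 1 := fun i => by
    rw [abs_of_pos (exp_pos _)]
    exact exp_le_one_iff.2 (mul_nonpos_of_nonpos_of_nonneg (neg_nonpos.2 (hl i.1)) ht)
  refine (φ.hasSum_inner_tsum_mul_smul hμ x z).sigma fun j => ?_
  rw [inner_eigenProj, Finset.sum_mul]
  convert hasSum_fintype _ using 2 with k
  ring

end EigenExpansion

theorem inner_eigenProj_eq_zero_of_forall_Ioo {Z : Type*} [NormedAddCommGroup Z]
    [InnerProductSpace ℝ Z] {κ : ℕ → Type*} [∀ j, Fintype (κ j)] {l : ℕ → ℝ} (φ : HilbertBasis (Σ j, κ j) ℝ Z) (hl : ∀ j, 0 ≤ l j)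
    (hlmono : StrictMono l) {δ : ℝ} (hδ : 0 < δ) {x z : Z}
    (h : ∀ t ∈ Ioo 0 δ, ⟪x, ∑' i : Σ j, κ j, (exp (-l i.1 * t) * ⟪z, φ i⟫_ℝ) • φ i⟫_ℝ = 0)
    (j : ℕ) : ⟪x, eigenProj φ j z⟫_ℝ = 0 := by
  have hseries : ∀ t, 0 ≤ t → dirichletSeries (fun j => ⟪x, eigenProj φ j z⟫_ℝ) l t =
      ⟪x, ∑' i : Σ j, κ j, (exp (-l i.1 * t) * ⟪z, φ i⟫_ℝ) • φ i⟫_ℝ := fun t ht =>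
    (hasSum_inner_eigenProj_mul_exp φ hl x z ht).tsum_eq
  have hsum := summable_abs_inner_eigenProj φ x z
  have hzero := dirichletSeries_eqOn_zero_of_eqOn_Ioo hl hsum hδ fun t ht =>
    (hseries t ht.1.le).trans (h t ht)
  refine congrFun (dirichletSeries_coeff_eq_zero hlmono hsum ?_) j
  filter_upwards [eventually_gt_atTop 0] with t ht using hzero ht

theorem unique_continuation_of_indep_general
    {U Z : Type*} [NormedAddCommGroup U] [InnerProductSpace ℝ U] [CompleteSpace U]
    [NormedAddCommGroup Z] [InnerProductSpace ℝ Z] [CompleteSpace Z]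
    (γ : ℕ → ℕ) (φ : HilbertBasis (Σ j : ℕ, Fin (γ j)) ℝ Z)
    (l : ℕ → ℝ) (hl0 : 0 < l 0) (hlmono : StrictMono l)
    (T : ℝ → Z →L[ℝ] Z)
    (hT : ∀ t : ℝ, 0 ≤ t → ∀ z : Z,
      T t z = ∑' i : (Σ j : ℕ, Fin (γ j)), (Real.exp (-(l i.1) * t) * ⟪z, φ i⟫_ℝ) • φ i)
    (B : U →L[ℝ] Z)
    (hindep : ∀ j : ℕ,
      LinearIndependent ℝ (fun k : Fin (γ j) => ContinuousLinearMap.adjoint B (φ ⟨j, k⟩)))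
    (δ : ℝ) (hδ : 0 < δ) (z : Z)
    (hz : ∀ t ∈ Set.Icc (0 : ℝ) δ, ContinuousLinearMap.adjoint B (T t z) = 0) :
    z = 0 := by
  have hl : ∀ j, 0 ≤ l j := fun j => hl0.le.trans (hlmono.monotone j.zero_le)
  have hproj : ∀ j, ContinuousLinearMap.adjoint B (eigenProj φ j z) = 0 := by
    intro j
    set u := ContinuousLinearMap.adjoint B (eigenProj φ j z)
    have h := inner_eigenProj_eq_zero_of_forall_Ioo φ hl hlmono hδ (x := B u) (fun t ht => by
      rw [← hT t ht.1.le, ← ContinuousLinearMap.adjoint_inner_right,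
        hz t (Ioo_subset_Icc_self ht), inner_zero_right]) j
    rwa [← ContinuousLinearMap.adjoint_inner_right, inner_self_eq_zero] at h
  have hcoeff : ∀ i, ⟪z, φ i⟫_ℝ = 0 := by
    rintro ⟨j, k⟩
    have h := hproj j
    simp only [eigenProj, map_sum, map_smul] at h
    exact linearIndependent_iff'.mp (hindep j) Finset.univ _ h k (Finset.mem_univ k)
  refine φ.repr.map_eq_zero_iff.mp (lp.ext (funext fun i => ?_))
  simp [φ.repr_apply_apply, real_inner_comm, hcoeff]

/-- Unique continuation: if for each j the vectors
{B*φ_{j,1},…,B*φ_{j,γ_j}} are linearly independent, and B* T(t) z = 0 for all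
t ∈ [0, δ] with δ > 0, then z = 0. -/
theorem unique_continuation_of_indep
    {U Z : Type*} [NormedAddCommGroup U] [InnerProductSpace ℝ U] [CompleteSpace U]
    [NormedAddCommGroup Z] [InnerProductSpace ℝ Z] [CompleteSpace Z]
    (γ : ℕ → ℕ) (φ : HilbertBasis (Σ j : ℕ, Fin (γ j)) ℝ Z)
    (l : ℕ → ℝ) (hl0 : 0 < l 0) (hlmono : StrictMono l)
    (hltop : Filter.Tendsto l Filter.atTop Filter.atTop)
    (T : ℝ → Z →L[ℝ] Z)
    (hT : ∀ t : ℝ, 0 ≤ t → ∀ z : Z,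
      T t z = ∑' i : (Σ j : ℕ, Fin (γ j)), (Real.exp (-(l i.1) * t) * ⟪z, φ i⟫_ℝ) • φ i)
    (B : U →L[ℝ] Z)
    (hindep : ∀ j : ℕ,
      LinearIndependent ℝ (fun k : Fin (γ j) => ContinuousLinearMap.adjoint B (φ ⟨j, k⟩)))
    (δ : ℝ) (hδ : 0 < δ) (z : Z)
    (hz : ∀ t ∈ Set.Icc (0 : ℝ) δ, ContinuousLinearMap.adjoint B (T t z) = 0) :
    z = 0 :=
  unique_continuation_of_indep_general γ φ l hl0 hlmono T hT B hindep δ hδ z hz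
end

section
/- Let Z, U be Hilbert spaces, T(t) a strongly continuous semigroup on Z, B : U → Z bounded linear, and G_{τδ} u = ∫_{τ−δ}^{τ} T(τ−s) B u(s) ds the controllability map with Gramian Q_{τδ} = G_{τδ} G*_{τδ}. Suppose G_{τδ} has dense range. Then for every y_0 ∈ Z and z_1 ∈ Z, the controls u_α = G*_{τδ}(α I + Q_{τδ})^{-1}(z_1 − T(δ) y_0) satisfy lim_{α→0+} ( T(δ) y_0 + ∫_{τ−δ}^{τ} T(τ−s) B u_α(s) ds ) = z_1. -/
/-!
With `h = z₁ - T δ y₀`, the state reached by `u_α` is `T δ y₀ + Q (R α h) = z₁ - α R α h`, so it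
suffices that `α R α → 0` strongly. Positivity of `Q = G G*` gives `‖α R α‖ ≤ 1`; on `range Q` the
convergence is explicit, since `α R α (Q z) = α z - α R α (α z)`; and `range Q` is dense because its
closure is `(ker G*)ᗮ`, the closure of `range G`. A uniformly bounded family of operators converging
on a dense set converges everywhere.
-/

open scoped InnerProductSpace InnerProduct Topology MeasureTheory
open Filter ContinuousLinearMap

theorem tendsto_apply_of_dense_of_eventually_norm_le
    {𝕜 E F ι : Type*} [NontriviallyNormedField 𝕜] [NormedAddCommGroup E] [NormedSpace 𝕜 E]
    [NormedAddCommGroup F] [NormedSpace 𝕜 F] {l : Filter ι} {A : ι → E →L[𝕜] F} {C : ℝ}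
    (hA : ∀ᶠ i in l, ‖A i‖ ≤ C) {s : Set E} (hs : Dense s) {f : E →L[𝕜] F}
    (h : ∀ x ∈ s, Tendsto (fun i ↦ A i x) l (𝓝 (f x))) (x : E) :
    Tendsto (fun i ↦ A i x) l (𝓝 (f x)) := by
  let ι' := {i // ‖A i‖ ≤ C}
  have hrange : Set.range (Subtype.val : ι' → ι) ∈ l := by rwa [Subtype.range_coe_subtype]
  have hequi : Equicontinuous fun i : ι' ↦ ⇑(A i) := by
    have := (NormedSpace.equicontinuous_TFAE fun i : ι' ↦ A i).out 5 1
    exact this.mp ⟨C, fun i ↦ i.2⟩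
  have hclosed := hequi.isClosed_setOfPred_tendsto (l := comap Subtype.val l) f.continuous
  refine (tendsto_comap'_iff (m := fun i ↦ A i x) hrange).1 ?_
  refine hclosed.closure_subset_iff.2 (fun y hy ↦ ?_) (hs.closure_eq ▸ Set.mem_univ x)
  exact (tendsto_comap'_iff hrange).2 (h y hy)

section

variable {𝕜 E F : Type*} [RCLike 𝕜] [NormedAddCommGroup E] [InnerProductSpace 𝕜 E]
  [CompleteSpace E] [NormedAddCommGroup F] [InnerProductSpace 𝕜 F] [CompleteSpace F]

theorem ContinuousLinearMap.topologicalClosure_range_self_comp_adjoint (G : E →L[𝕜] F) :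
    (G ∘L G†).range.topologicalClosure = G.range.topologicalClosure := by
  have hsa : (G ∘L G†)† = G ∘L G† := by rw [adjoint_comp, adjoint_adjoint]
  have := orthogonal_ker (G ∘L G†)
  rwa [hsa, ker_self_comp_adjoint, orthogonal_ker, adjoint_adjoint, eq_comm] at this

theorem DenseRange.self_comp_adjoint {G : E →L[𝕜] F} (hG : DenseRange G) :
    DenseRange (G ∘L G†) := by
  rw [DenseRange, ← coe_coe, ← LinearMap.coe_range,
    Submodule.dense_iff_topologicalClosure_eq_top] at hG ⊢
  exact (topologicalClosure_range_self_comp_adjoint G).trans hG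

end

section

variable {E : Type*} [NormedAddCommGroup E] [InnerProductSpace ℝ E] {Q : E →L[ℝ] E}

theorem ContinuousLinearMap.IsPositive.norm_smul_le_one_of_add_comp_eq_one (hQ : Q.IsPositive)
    {α : ℝ} (hα : 0 ≤ α) {R : E →L[ℝ] E} (hR : (α • 1 + Q) ∘L R = 1) : ‖α • R‖ ≤ 1 := by
  refine opNorm_le_bound _ zero_le_one fun w ↦ ?_
  set z := R w
  have hzw : α • z + Q z = w := by simpa using congr($hR w)
  have hnorm_sq : α * ‖z‖ * ‖z‖ ≤ ‖w‖ * ‖z‖ := calc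
    α * ‖z‖ * ‖z‖ ≤ α * ‖z‖ * ‖z‖ + ⟪z, Q z⟫_ℝ := le_add_of_nonneg_right (hQ.inner_nonneg_right z)
    _ = ⟪z, w⟫_ℝ := by
      rw [← hzw, inner_add_right, real_inner_smul_right, real_inner_self_eq_norm_mul_norm,
        mul_assoc]
    _ ≤ ‖w‖ * ‖z‖ := (real_inner_le_norm z w).trans_eq (mul_comm _ _)
  rw [smul_apply, norm_smul, Real.norm_of_nonneg hα, one_mul]
  rcases (norm_nonneg z).eq_or_lt with hz | hz
  · rw [← hz, mul_zero]
    exact norm_nonneg w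
  · exact le_of_mul_le_mul_right hnorm_sq hz

variable {R : ℝ → E →L[ℝ] E}
  (hR : ∀ α : ℝ, 0 < α → R α ∘L (α • 1 + Q) = 1 ∧ (α • 1 + Q) ∘L R α = 1)
include hR

theorem ContinuousLinearMap.IsPositive.tendsto_smul_apply_map_nhdsGT_zero (hQ : Q.IsPositive)
    (z : E) : Tendsto (fun α ↦ α • R α (Q z)) (𝓝[>] 0) (𝓝 0) := by
  have hbound : ∀ᶠ α in 𝓝[>] (0 : ℝ), ‖α • R α (Q z)‖ ≤ 2 * ‖α • z‖ := by
    filter_upwards [self_mem_nhdsWithin] with α (hα : 0 < α)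
    have hRz : α • R α z + R α (Q z) = z := by simpa using congr($((hR α hα).1) z)
    have hnorm := hQ.norm_smul_le_one_of_add_comp_eq_one hα.le (hR α hα).2
    calc ‖α • R α (Q z)‖ = ‖α • z - (α • R α) (α • z)‖ := by
          rw [eq_sub_of_add_eq' hRz, smul_apply, map_smul, smul_sub]
      _ ≤ ‖α • z‖ + ‖α • z‖ :=
          (norm_sub_le _ _).trans (add_le_add le_rfl ((le_opNorm _ _).trans
            (mul_le_of_le_one_left (norm_nonneg _) hnorm)))
      _ = 2 * ‖α • z‖ := (two_mul _).symm
  refine squeeze_zero_norm' hbound (tendsto_nhdsWithin_of_tendsto_nhds ?_)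
  have hcont : Continuous fun α : ℝ ↦ 2 * ‖α • z‖ :=
    (continuous_id.smul continuous_const).norm.const_mul 2
  simpa using hcont.tendsto 0

theorem ContinuousLinearMap.IsPositive.tendsto_smul_apply_nhdsGT_zero_of_denseRange
    (hQ : Q.IsPositive) (hdense : DenseRange Q) (z : E) :
    Tendsto (fun α ↦ α • R α z) (𝓝[>] 0) (𝓝 0) := by
  have hbound : ∀ᶠ α in 𝓝[>] (0 : ℝ), ‖α • R α‖ ≤ 1 := by
    filter_upwards [self_mem_nhdsWithin] with α (hα : 0 < α)
    exact hQ.norm_smul_le_one_of_add_comp_eq_one hα.le (hR α hα).2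
  simpa using tendsto_apply_of_dense_of_eventually_norm_le (f := 0) hbound hdense
    (by rintro _ ⟨y, rfl⟩; simpa using hQ.tendsto_smul_apply_map_nhdsGT_zero hR y) z

end

theorem approximate_steering_general
    {U Z : Type*} [NormedAddCommGroup U] [InnerProductSpace ℝ U] [CompleteSpace U]
    [NormedAddCommGroup Z] [InnerProductSpace ℝ Z] [CompleteSpace Z]
    (T : ℝ → Z →L[ℝ] Z)
    (B : U →L[ℝ] Z) (τ δ : ℝ)
    (G : (MeasureTheory.Lp U 2 (MeasureTheory.volume.restrict (Set.Ioc (τ - δ) τ))) →L[ℝ] Z)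
    (hG : ∀ u, G u = ∫ s in Set.Ioc (τ - δ) τ, T (τ - s) (B (u s)))
    (Q : Z →L[ℝ] Z) (hQ : Q = G ∘L ContinuousLinearMap.adjoint G)
    (R : ℝ → Z →L[ℝ] Z)
    (hR : ∀ α : ℝ, 0 < α →
      (R α) ∘L (α • (1 : Z →L[ℝ] Z) + Q) = 1 ∧ (α • (1 : Z →L[ℝ] Z) + Q) ∘L (R α) = 1)
    (hdense : DenseRange G) (y₀ z₁ : Z) :
    Filter.Tendsto
      (fun α : ℝ =>
        T δ y₀ + ∫ s in Set.Ioc (τ - δ) τ,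
          T (τ - s) (B ((ContinuousLinearMap.adjoint G (R α (z₁ - T δ y₀))) s)))
      (𝓝[>] 0) (𝓝 z₁) := by
  subst hQ
  set h := z₁ - T δ y₀
  have hlim : Tendsto (fun α : ℝ ↦ z₁ - α • R α h) (𝓝[>] 0) (𝓝 z₁) := by
    simpa using tendsto_const_nhds.sub <|
      G.isPositive_self_comp_adjoint.tendsto_smul_apply_nhdsGT_zero_of_denseRange hR
        hdense.self_comp_adjoint h
  have hsteer : ∀ α : ℝ, 0 < α → T δ y₀ + ∫ s in Set.Ioc (τ - δ) τ,
      T (τ - s) (B (adjoint G (R α h) s)) = z₁ - α • R α h := fun α hα ↦ by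
    have hRh : α • R α h + G (adjoint G (R α h)) = h := by simpa using congr($((hR α hα).2) h)
    rw [← hG, eq_sub_of_add_eq' hRh, ← add_sub_assoc, add_sub_cancel]
  exact hlim.congr' (eventually_nhdsWithin_of_forall fun α hα ↦ (hsteer α hα).symm)

/-- If the controllability map G_{τδ} has dense range, then the controls
u_α = G*_{τδ}(αI + Q_{τδ})⁻¹(z₁ − T(δ) y₀) steer the mild solution
T(δ)y₀ + ∫_{τ−δ}^{τ} T(τ−s) B u_α(s) ds to z₁ as α → 0⁺. -/
theorem approximate_steering
    {U Z : Type*} [NormedAddCommGroup U] [InnerProductSpace ℝ U] [CompleteSpace U]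
    [NormedAddCommGroup Z] [InnerProductSpace ℝ Z] [CompleteSpace Z]
    (T : ℝ → Z →L[ℝ] Z) (hT0 : T 0 = 1)
    (hTsemi : ∀ t s : ℝ, 0 ≤ t → 0 ≤ s → T (t + s) = (T t) ∘L (T s))
    (hTcont : ∀ z : Z, ContinuousOn (fun t : ℝ => T t z) (Set.Ici (0 : ℝ)))
    (B : U →L[ℝ] Z) (τ δ : ℝ) (hδ : 0 < δ) (hδτ : δ < τ)
    (G : (MeasureTheory.Lp U 2 (MeasureTheory.volume.restrict (Set.Ioc (τ - δ) τ))) →L[ℝ] Z)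
    (hG : ∀ u, G u = ∫ s in Set.Ioc (τ - δ) τ, T (τ - s) (B (u s)))
    (Q : Z →L[ℝ] Z) (hQ : Q = G ∘L ContinuousLinearMap.adjoint G)
    (R : ℝ → Z →L[ℝ] Z)
    (hR : ∀ α : ℝ, 0 < α →
      (R α) ∘L (α • (1 : Z →L[ℝ] Z) + Q) = 1 ∧ (α • (1 : Z →L[ℝ] Z) + Q) ∘L (R α) = 1)
    (hdense : DenseRange G) (y₀ z₁ : Z) :
    Filter.Tendsto
      (fun α : ℝ =>
        T δ y₀ + ∫ s in Set.Ioc (τ - δ) τ,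
          T (τ - s) (B ((ContinuousLinearMap.adjoint G (R α (z₁ - T δ y₀))) s)))
      (𝓝[>] 0) (𝓝 z₁) :=
  approximate_steering_general T B τ δ G hG Q hQ R hR hdense y₀ z₁
end
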